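/- Let f(x) = (2 − 2cos x)(2 + 2cos x), which is a nonnegative trigonometric polynomial vanishing exactly at 0 and π in [0,2π), each zero having order two. Let g = 3, so that M_3(0) = {2π/3, 4π/3} and M_3(π) = {5π/3, π/3}. Then the trigonometric polynomial p(x) = Π_{x̂ ∈ M_3(0) ∪ M_3(π)} (2 − 2cos(x − x̂)) satisfies the TGM conditions (i) and (ii) relative to f and g = 3. -/
import Mathlib


open Complex Filter Topology

noncomputable section

/-- A real-valued function is a trigonometric polynomial: a finite sum `∑_{|j|≤c} a_j e^{ijx}`. -/
def IsTrigPolyR (f : ℝ → ℝ) : Prop :=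
  ∃ (c : ℕ) (a : ℤ → ℂ), ∀ x : ℝ,
    (f x : ℂ) = ∑ j ∈ Finset.Icc (-(c : ℤ)) (c : ℤ), a j * Complex.exp (Complex.I * (j : ℂ) * (x : ℂ))

/-- TGM condition (i): for every zero `x₀` of `f` (in `[0,2π)`), for each `k = 1,…,g−1`,
`lim_{x→x₀} p(x + 2πk/g)² / f(x)` exists finite. -/
def TGMCondOne (f p : ℝ → ℝ) (g : ℕ) : Prop :=
  ∀ x₀ ∈ Set.Ico (0 : ℝ) (2 * Real.pi), f x₀ = 0 →
    ∀ j : ℕ, 1 ≤ j → j < g →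
      ∃ L : ℝ,
        Filter.Tendsto (fun x : ℝ => (p (x + 2 * Real.pi * (j : ℝ) / (g : ℝ)))^2 / f x)
          (nhdsWithin x₀ {x : ℝ | f x ≠ 0}) (nhds L)

/-- TGM condition (ii): `∑_{y ∈ Ω_g(x)} p(y)² > 0` for all `x ∈ [0,2π)`. -/
def TGMCondTwo (p : ℝ → ℝ) (g : ℕ) : Prop :=
  ∀ x ∈ Set.Ico (0 : ℝ) (2 * Real.pi),
    0 < ∑ j ∈ Finset.range g, (p (x + 2 * Real.pi * (j : ℝ) / (g : ℝ)))^2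

/-- The projected symbol `f̂(x) = (1/g) ∑_{y ∈ Ω_g(x/g)} f(y) |p(y)|²`. -/
def projSymbol (g : ℕ) (f p : ℝ → ℝ) : ℝ → ℝ := fun x =>
  ((g : ℝ))⁻¹ *
    ∑ j ∈ Finset.range g,
      f ((x + 2 * Real.pi * (j : ℝ)) / (g : ℝ)) * (p ((x + 2 * Real.pi * (j : ℝ)) / (g : ℝ)))^2


lemma lim_helper (a ε : ℝ) (hs : Real.sin a = 0) (hc : Real.cos a = ε) (hε : ε^2 = 1) :
    Filter.Tendsto
        (fun x : ℝ => (2 - 2 * Real.cos x) * (2 + 2 * Real.cos x) / (x - a) ^ 2)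
        (nhdsWithin a {a}ᶜ) (nhds 4) := by
  have hslope : Filter.Tendsto (fun x : ℝ => Real.sin x / (x - a))
      (nhdsWithin a {a}ᶜ) (nhds ε) := by
    have h := (hasDerivAt_iff_tendsto_slope).mp (Real.hasDerivAt_sin a)
    rw [hc] at h
    refine h.congr (fun x => ?_)
    rw [slope_def_field, hs, sub_zero]
  have h4 : Filter.Tendsto (fun x : ℝ => 4 * (Real.sin x / (x - a))^2)
      (nhdsWithin a {a}ᶜ) (nhds (4 * ε^2)) := (hslope.pow 2).const_mul 4
  rw [hε, mul_one] at h4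
  refine h4.congr (fun x => ?_)
  rw [div_pow]
  have : (2 - 2 * Real.cos x) * (2 + 2 * Real.cos x) = 4 * Real.sin x ^ 2 := by
    linear_combination (-4 : ℝ) * Real.sin_sq_add_cos_sq x
  rw [this]; ring

lemma ratio_helper (x₀ : ℝ) (P q A D f : ℝ → ℝ)
    (hq : ContinuousAt q x₀) (hA : ContinuousAt A x₀) (hD : ContinuousAt D x₀)
    (hA0 : A x₀ = 0) (hD0 : D x₀ ≠ 0)
    (hsplit : ∀ x, P x = A x * q x)
    (hf : ∀ x, f x = A x * D x) :
    Filter.Tendsto (fun x => (P x)^2 / f x) (nhdsWithin x₀ {x | f x ≠ 0}) (nhds 0) := by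
  have hcont : ContinuousAt (fun x => A x * (q x)^2 / D x) x₀ := (hA.mul (hq.pow 2)).div hD hD0
  have h0 : Filter.Tendsto (fun x => A x * (q x)^2 / D x) (nhdsWithin x₀ {x | f x ≠ 0})
      (nhds 0) := by
    have h := hcont.tendsto
    rw [hA0, zero_mul, zero_div] at h
    exact h.mono_left nhdsWithin_le_nhds
  refine h0.congr' ?_
  filter_upwards [self_mem_nhdsWithin] with x hx
  have hfx : f x ≠ 0 := hx
  rw [hf] at hfx
  have hAx : A x ≠ 0 := fun h => hfx (by rw [h, zero_mul])
  have hDx : D x ≠ 0 := fun h => hfx (by rw [h, mul_zero])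
  rw [hsplit, hf]
  field_simp

lemma p_zero_struct (y : ℝ)
    (h : (2 - 2 * Real.cos (y - 2 * Real.pi / 3)) * (2 - 2 * Real.cos (y - 4 * Real.pi / 3)) *
          (2 - 2 * Real.cos (y - 5 * Real.pi / 3)) * (2 - 2 * Real.cos (y - Real.pi / 3)) = 0) :
    ∃ (a n : ℤ), (a = 1 ∨ a = 2 ∨ a = 4 ∨ a = 5) ∧ y = (a + 6 * n) * (Real.pi / 3) := by
  have key : ∀ (c : ℝ) (a : ℤ), (a : ℝ) * (Real.pi / 3) = c → 2 - 2 * Real.cos (y - c) = 0 →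
      ∃ n : ℤ, y = (a + 6 * n) * (Real.pi / 3) := by
    intro c a hc h0
    have hcos : Real.cos (y - c) = 1 := by linarith
    obtain ⟨n, hn⟩ := (Real.cos_eq_one_iff _).mp hcos
    exact ⟨n, by nlinarith [Real.pi_pos]⟩
  rcases mul_eq_zero.mp h with h' | h1
  · rcases mul_eq_zero.mp h' with h'' | h2
    · rcases mul_eq_zero.mp h'' with h3 | h4
      · obtain ⟨n, hn⟩ := key (2 * Real.pi / 3) 2 (by ring) h3
        exact ⟨2, n, by norm_num, hn⟩
      · obtain ⟨n, hn⟩ := key (4 * Real.pi / 3) 4 (by ring) h4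
        exact ⟨4, n, by norm_num, hn⟩
    · obtain ⟨n, hn⟩ := key (5 * Real.pi / 3) 5 (by ring) h2
      exact ⟨5, n, by norm_num, hn⟩
  · obtain ⟨n, hn⟩ := key (Real.pi / 3) 1 (by ring) h1
    exact ⟨1, n, by norm_num, hn⟩

lemma f_zero_iff (x : ℝ) (hx : x ∈ Set.Ico (0 : ℝ) (2 * Real.pi)) :
    (2 - 2 * Real.cos x) * (2 + 2 * Real.cos x) = 0 ↔ x = 0 ∨ x = Real.pi := by
  obtain ⟨hx0, hx2⟩ := hx
  constructor
  · intro h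
    have hs : Real.sin x = 0 := by nlinarith [Real.sin_sq_add_cos_sq x]
    obtain ⟨n, hn⟩ := Real.sin_eq_zero_iff.mp hs
    have hπ := Real.pi_pos
    have h0 : (0 : ℝ) ≤ (n : ℝ) := by nlinarith
    have h2 : (n : ℝ) < 2 := by nlinarith
    have h0' : (0 : ℤ) ≤ n := by exact_mod_cast h0
    have h2' : n < 2 := by exact_mod_cast h2
    interval_cases n
    · left; simpa using hn.symm
    · right; simpa using hn.symm
  · rintro (rfl | rfl) <;> simp [Real.cos_pi]

theorem example_mirror_zeros_g_three :
    (∀ x : ℝ, 0 ≤ (2 - 2 * Real.cos x) * (2 + 2 * Real.cos x))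
    ∧ (∀ x ∈ Set.Ico (0 : ℝ) (2 * Real.pi),
        ((2 - 2 * Real.cos x) * (2 + 2 * Real.cos x) = 0 ↔ x = 0 ∨ x = Real.pi))
    ∧ Filter.Tendsto
        (fun x : ℝ => (2 - 2 * Real.cos x) * (2 + 2 * Real.cos x) / x ^ 2)
        (nhdsWithin 0 {(0 : ℝ)}ᶜ) (nhds 4)
    ∧ Filter.Tendsto
        (fun x : ℝ => (2 - 2 * Real.cos x) * (2 + 2 * Real.cos x) / (x - Real.pi) ^ 2)
        (nhdsWithin Real.pi {Real.pi}ᶜ) (nhds 4)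
    ∧ TGMCondOne (fun x : ℝ => (2 - 2 * Real.cos x) * (2 + 2 * Real.cos x))
        (fun x : ℝ =>
          (2 - 2 * Real.cos (x - 2 * Real.pi / 3)) * (2 - 2 * Real.cos (x - 4 * Real.pi / 3)) *
          (2 - 2 * Real.cos (x - 5 * Real.pi / 3)) * (2 - 2 * Real.cos (x - Real.pi / 3)))
        3
    ∧ TGMCondTwo
        (fun x : ℝ =>
          (2 - 2 * Real.cos (x - 2 * Real.pi / 3)) * (2 - 2 * Real.cos (x - 4 * Real.pi / 3)) *
          (2 - 2 * Real.cos (x - 5 * Real.pi / 3)) * (2 - 2 * Real.cos (x - Real.pi / 3)))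
        3 := by
  refine ⟨?_, ?_, ?_, ?_, ?_, ?_⟩
  · intro x
    nlinarith [Real.neg_one_le_cos x, Real.cos_le_one x]
  · exact fun x hx => f_zero_iff x hx
  · have h := lim_helper 0 1 (by simp) (by simp) (by norm_num)
    simpa using h
  · exact lim_helper Real.pi (-1) Real.sin_pi Real.cos_pi (by norm_num)
  · -- TGMCondOne
    intro x₀ hx₀ hf0 j hj1 hj3
    refine ⟨0, ?_⟩
    rcases (f_zero_iff x₀ hx₀).mp hf0 with rfl | rfl <;> interval_cases j
    · -- x₀ = 0, j = 1
      refine ratio_helper 0 _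
        (fun x => (2 - 2 * Real.cos (x + 2 * Real.pi * ((1:ℕ):ℝ) / ((3:ℕ):ℝ) - 4 * Real.pi / 3)) *
          (2 - 2 * Real.cos (x + 2 * Real.pi * ((1:ℕ):ℝ) / ((3:ℕ):ℝ) - 5 * Real.pi / 3)) *
          (2 - 2 * Real.cos (x + 2 * Real.pi * ((1:ℕ):ℝ) / ((3:ℕ):ℝ) - Real.pi / 3)))
        (fun x => 2 - 2 * Real.cos x) (fun x => 2 + 2 * Real.cos x) _
        (by fun_prop) (by fun_prop) (by fun_prop) (by simp) (by norm_num) ?_ (fun x => rfl)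
      intro x
      have c1 : Real.cos (x + 2 * Real.pi * ((1:ℕ):ℝ) / ((3:ℕ):ℝ) - 2 * Real.pi / 3)
          = Real.cos x := by
        rw [show x + 2 * Real.pi * ((1:ℕ):ℝ) / ((3:ℕ):ℝ) - 2 * Real.pi / 3 = x by
          push_cast; ring]
      show (2 - 2 * Real.cos (x + 2 * Real.pi * ((1:ℕ):ℝ) / ((3:ℕ):ℝ) - 2 * Real.pi / 3)) * _ * _ * _ = _
      rw [c1]; ring
    · -- x₀ = 0, j = 2
      refine ratio_helper 0 _
        (fun x => (2 - 2 * Real.cos (x + 2 * Real.pi * ((2:ℕ):ℝ) / ((3:ℕ):ℝ) - 2 * Real.pi / 3)) *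
          (2 - 2 * Real.cos (x + 2 * Real.pi * ((2:ℕ):ℝ) / ((3:ℕ):ℝ) - 5 * Real.pi / 3)) *
          (2 - 2 * Real.cos (x + 2 * Real.pi * ((2:ℕ):ℝ) / ((3:ℕ):ℝ) - Real.pi / 3)))
        (fun x => 2 - 2 * Real.cos x) (fun x => 2 + 2 * Real.cos x) _
        (by fun_prop) (by fun_prop) (by fun_prop) (by simp) (by norm_num) ?_ (fun x => rfl)
      intro x
      have c1 : Real.cos (x + 2 * Real.pi * ((2:ℕ):ℝ) / ((3:ℕ):ℝ) - 4 * Real.pi / 3)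
          = Real.cos x := by
        rw [show x + 2 * Real.pi * ((2:ℕ):ℝ) / ((3:ℕ):ℝ) - 4 * Real.pi / 3 = x by
          push_cast; ring]
      show _ * (2 - 2 * Real.cos (x + 2 * Real.pi * ((2:ℕ):ℝ) / ((3:ℕ):ℝ) - 4 * Real.pi / 3)) * _ * _ = _
      rw [c1]; ring
    · -- x₀ = π, j = 1
      refine ratio_helper Real.pi _
        (fun x => (2 - 2 * Real.cos (x + 2 * Real.pi * ((1:ℕ):ℝ) / ((3:ℕ):ℝ) - 2 * Real.pi / 3)) *
          (2 - 2 * Real.cos (x + 2 * Real.pi * ((1:ℕ):ℝ) / ((3:ℕ):ℝ) - 4 * Real.pi / 3)) *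
          (2 - 2 * Real.cos (x + 2 * Real.pi * ((1:ℕ):ℝ) / ((3:ℕ):ℝ) - Real.pi / 3)))
        (fun x => 2 + 2 * Real.cos x) (fun x => 2 - 2 * Real.cos x) _
        (by fun_prop) (by fun_prop) (by fun_prop) (by simp [Real.cos_pi])
        (by norm_num [Real.cos_pi]) ?_ (fun x => by ring)
      intro x
      have c1 : Real.cos (x + 2 * Real.pi * ((1:ℕ):ℝ) / ((3:ℕ):ℝ) - 5 * Real.pi / 3)
          = -Real.cos x := by
        rw [show x + 2 * Real.pi * ((1:ℕ):ℝ) / ((3:ℕ):ℝ) - 5 * Real.pi / 3 = x - Real.pi by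
          push_cast; ring, Real.cos_sub_pi]
      show _ * _ * (2 - 2 * Real.cos (x + 2 * Real.pi * ((1:ℕ):ℝ) / ((3:ℕ):ℝ) - 5 * Real.pi / 3)) * _ = _
      rw [c1]; ring
    · -- x₀ = π, j = 2
      refine ratio_helper Real.pi _
        (fun x => (2 - 2 * Real.cos (x + 2 * Real.pi * ((2:ℕ):ℝ) / ((3:ℕ):ℝ) - 2 * Real.pi / 3)) *
          (2 - 2 * Real.cos (x + 2 * Real.pi * ((2:ℕ):ℝ) / ((3:ℕ):ℝ) - 4 * Real.pi / 3)) *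
          (2 - 2 * Real.cos (x + 2 * Real.pi * ((2:ℕ):ℝ) / ((3:ℕ):ℝ) - 5 * Real.pi / 3)))
        (fun x => 2 + 2 * Real.cos x) (fun x => 2 - 2 * Real.cos x) _
        (by fun_prop) (by fun_prop) (by fun_prop) (by simp [Real.cos_pi])
        (by norm_num [Real.cos_pi]) ?_ (fun x => by ring)
      intro x
      have c1 : Real.cos (x + 2 * Real.pi * ((2:ℕ):ℝ) / ((3:ℕ):ℝ) - Real.pi / 3)
          = -Real.cos x := by
        rw [show x + 2 * Real.pi * ((2:ℕ):ℝ) / ((3:ℕ):ℝ) - Real.pi / 3 = x + Real.pi by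
          push_cast; ring, Real.cos_add_pi]
      show _ * _ * _ * (2 - 2 * Real.cos (x + 2 * Real.pi * ((2:ℕ):ℝ) / ((3:ℕ):ℝ) - Real.pi / 3)) = _
      rw [c1]; ring
  · -- TGMCondTwo
    intro x hx
    by_contra hle
    push_neg at hle
    have hnn : ∀ j ∈ Finset.range 3, (0:ℝ) ≤
        ((fun x : ℝ =>
          (2 - 2 * Real.cos (x - 2 * Real.pi / 3)) * (2 - 2 * Real.cos (x - 4 * Real.pi / 3)) *
          (2 - 2 * Real.cos (x - 5 * Real.pi / 3)) * (2 - 2 * Real.cos (x - Real.pi / 3)))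
          (x + 2 * Real.pi * (j : ℝ) / ((3:ℕ) : ℝ)))^2 := fun j _ => sq_nonneg _
    have hsum0 := le_antisymm hle (Finset.sum_nonneg hnn)
    have hz := (Finset.sum_eq_zero_iff_of_nonneg hnn).mp hsum0
    have hp0 := (pow_eq_zero_iff (by norm_num : (2:ℕ) ≠ 0)).mp (hz 0 (by norm_num))
    have hp1 := (pow_eq_zero_iff (by norm_num : (2:ℕ) ≠ 0)).mp (hz 1 (by norm_num))
    have hp2 := (pow_eq_zero_iff (by norm_num : (2:ℕ) ≠ 0)).mp (hz 2 (by norm_num))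
    obtain ⟨a₀, n₀, ha₀, e₀⟩ := p_zero_struct _ hp0
    obtain ⟨a₁, n₁, ha₁, e₁⟩ := p_zero_struct _ hp1
    obtain ⟨a₂, n₂, ha₂, e₂⟩ := p_zero_struct _ hp2
    push_cast at e₀ e₁ e₂
    have k1 : ((a₁ + 6*n₁ - a₀ - 6*n₀ - 2 : ℤ) : ℝ) * Real.pi = 0 := by
      push_cast
      linear_combination 3*e₀ - 3*e₁
    have k2 : ((a₂ + 6*n₂ - a₀ - 6*n₀ - 4 : ℤ) : ℝ) * Real.pi = 0 := by
      push_cast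
      linear_combination 3*e₀ - 3*e₂
    have k1' : (a₁ + 6*n₁ - a₀ - 6*n₀ - 2 : ℤ) = 0 := by
      exact_mod_cast (mul_eq_zero.mp k1).resolve_right Real.pi_ne_zero
    have k2' : (a₂ + 6*n₂ - a₀ - 6*n₀ - 4 : ℤ) = 0 := by
      exact_mod_cast (mul_eq_zero.mp k2).resolve_right Real.pi_ne_zero
    omega
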